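/- arXiv:1503.07075 — 2 statements merged into one kernel-verified Lean document; each statement's English description precedes it below -/
import Mathlib

section
/- With the two-qubit output eigenvalue formulas λ₀₀ = ((1+μ)/4)((1+x₀)²/4 + (1+x₁)²/4) + ((1−μ)/4)(2(1+x₀)(1+x₁)/4), λ₁₁ the same with signs flipped (x₀ → −x₀, x₁ → −x₁), and c = (1/4)((1+μ)x₀² + (1+μ)x₁² + 2(1−μ)x₀x₁), the inequality (λ₀₀ − λ₁₁)² ≤ c² holds if and only if |a² + μd²| − 2|a| ≥ 0, where a = x₀ + x₁ and d = x₀ − x₁. -/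
/-- Threshold criterion: `(λ₀₀ − λ₁₁)² ≤ c²` iff `|a² + μd²| − 2|a| ≥ 0`
where `a = x₀ + x₁`, `d = x₀ − x₁`. -/
theorem entanglement_threshold (μ x0 x1 : ℝ)
    (hμ : μ ∈ Set.Ioo (-1 : ℝ) 1)
    (hx0 : x0 ∈ Set.Icc (-(1/3) : ℝ) 1) (hx1 : x1 ∈ Set.Icc (-(1/3) : ℝ) 1) :
    (let l00 : ℝ := ((1 + μ) / 4) * ((1 + x0) ^ 2 / 4 + (1 + x1) ^ 2 / 4)
      + ((1 - μ) / 4) * (2 * (1 + x0) * (1 + x1) / 4)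
    let l11 : ℝ := ((1 + μ) / 4) * ((1 - x0) ^ 2 / 4 + (1 - x1) ^ 2 / 4)
      + ((1 - μ) / 4) * (2 * (1 - x0) * (1 - x1) / 4)
    let c : ℝ := (1/4) * ((1 + μ) * x0 ^ 2 + (1 + μ) * x1 ^ 2 + 2 * (1 - μ) * x0 * x1)
    let a : ℝ := x0 + x1
    let d : ℝ := x0 - x1
    (l00 - l11) ^ 2 ≤ c ^ 2 ↔ |a ^ 2 + μ * d ^ 2| - 2 * |a| ≥ 0) := by
  simp only
  set a : ℝ := x0 + x1 with ha
  set d : ℝ := x0 - x1 with hd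
  set X : ℝ := a ^ 2 + μ * d ^ 2 with hX
  have h1 : ((1 + μ) / 4) * ((1 + x0) ^ 2 / 4 + (1 + x1) ^ 2 / 4)
      + ((1 - μ) / 4) * (2 * (1 + x0) * (1 + x1) / 4)
      - (((1 + μ) / 4) * ((1 - x0) ^ 2 / 4 + (1 - x1) ^ 2 / 4)
      + ((1 - μ) / 4) * (2 * (1 - x0) * (1 - x1) / 4)) = a / 2 := by
    rw [ha]; ring
  have h2 : (1/4 : ℝ) * ((1 + μ) * x0 ^ 2 + (1 + μ) * x1 ^ 2 + 2 * (1 - μ) * x0 * x1)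
      = X / 4 := by
    rw [hX, ha, hd]; ring
  rw [h1, h2]
  clear hμ hx0 hx1 h1 h2
  clear_value X
  clear hX
  clear_value a d
  clear ha hd
  have hXa : |X| ^ 2 = X ^ 2 := sq_abs X
  have haa : |a| ^ 2 = a ^ 2 := sq_abs a
  constructor
  · intro h
    nlinarith [abs_nonneg X, abs_nonneg a, sq_nonneg (|X| - 2 * |a|), sq_nonneg (|X| + 2 * |a|)]
  · intro h
    nlinarith [abs_nonneg X, abs_nonneg a]
end

section
/- Entropy sandwich for mixtures: for a finite ensemble of density matrices ρ_i with probabilities p_i, Σ_i p_i S(ρ_i) ≤ S(Σ_i p_i ρ_i) ≤ Σ_i p_i S(ρ_i) + H(p), where S is von Neumann entropy and H(p) = −Σ_i p_i log p_i is the Shannon entropy of the weights. -/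
/-!
Write the mixture `σ = ∑ pᵢ ρᵢ` in an eigenbasis `(eₘ)` with eigenvalues `λₘ`, and each `ρᵢ` in an
eigenbasis `(vᵢⱼ)` with eigenvalues `aᵢⱼ`. For each `i` the overlaps `|⟨eₘ, vᵢⱼ⟩|²` form a doubly
stochastic matrix, and `λₘ = ∑ᵢⱼ pᵢ aᵢⱼ |⟨eₘ, vᵢⱼ⟩|²`. Concavity of `η(t) = -t log t` applied to
these averages gives the lower bound. For the upper bound, `σ ≥ pᵢ aᵢⱼ vᵢⱼ vᵢⱼᴴ` forces
`pᵢ aᵢⱼ ⟨vᵢⱼ, σ⁺ vᵢⱼ⟩ ≤ 1`, so the weights `pᵢ aᵢⱼ |⟨eₘ, vᵢⱼ⟩|² / λₘ` are stochastic in `(i, j)`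
and substochastic in `m`; concavity along them bounds `S(σ)` by the Shannon entropy of
`(pᵢ aᵢⱼ)`, which is `∑ pᵢ S(ρᵢ) + H(p)`.
-/

open Matrix ComplexOrder

noncomputable def vnEntropy {d : ℕ} (ρ : Matrix (Fin d) (Fin d) ℂ)
    (h : ρ.IsHermitian) : ℝ :=
  ∑ i, Real.negMulLog (h.eigenvalues i)

namespace Real

theorem sum_mul_negMulLog_le_negMulLog_sum {κ : Type*} [Fintype κ] {w x : κ → ℝ}
    (hw : ∀ k, 0 ≤ w k) (hx : ∀ k, 0 ≤ x k) (hsum : ∑ k, w k ≤ 1) :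
    ∑ k, w k * negMulLog (x k) ≤ negMulLog (∑ k, w k * x k) := by
  -- the missing mass `1 - ∑ w` sits at `0`, where `negMulLog` vanishes
  have h := concaveOn_negMulLog.map_add_sum_le (t := Finset.univ) (p := x) (v := 1 - ∑ k, w k)
    (q := 0) (fun k _ => hw k) (by ring) (fun k _ => hx k) (by linarith) Set.self_mem_Ici
  simpa [negMulLog_zero, smul_eq_mul] using h

theorem sum_sum_mul_negMulLog_le {κ μ : Type*} [Fintype κ] [Fintype μ] {c : κ → μ → ℝ}
    {x : κ → ℝ} (hc : ∀ k m, 0 ≤ c k m) (hx : ∀ k, 0 ≤ x k) (hsum : ∀ m, ∑ k, c k m ≤ 1) :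
    ∑ k, (∑ m, c k m) * negMulLog (x k) ≤ ∑ m, negMulLog (∑ k, c k m * x k) :=
  calc ∑ k, (∑ m, c k m) * negMulLog (x k) = ∑ m, ∑ k, c k m * negMulLog (x k) := by
        simp only [Finset.sum_mul]
        exact Finset.sum_comm
    _ ≤ _ := Finset.sum_le_sum fun m _ =>
        sum_mul_negMulLog_le_negMulLog_sum (fun k => hc k m) hx (hsum m)

variable {ι α β : Type*} [Fintype ι] [Fintype α] [Fintype β]

theorem sum_mul_sum_negMulLog_le_of_doublyStochastic {p : ι → ℝ} {a : ι → α → ℝ}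
    {E : ι × α → β → ℝ} {lam : β → ℝ} (hp : ∀ i, 0 ≤ p i) (hpsum : ∑ i, p i = 1)
    (ha : ∀ i j, 0 ≤ a i j) (hE : ∀ k m, 0 ≤ E k m) (hE₁ : ∀ k, ∑ m, E k m = 1)
    (hE₂ : ∀ i m, ∑ j, E (i, j) m = 1) (hlam : ∀ m, lam m = ∑ k, p k.1 * a k.1 k.2 * E k m) :
    ∑ i, p i * ∑ j, negMulLog (a i j) ≤ ∑ m, negMulLog (lam m) := by
  have hc : ∀ m, ∑ k : ι × α, p k.1 * E k m ≤ 1 := fun m => by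
    simp only [Fintype.sum_prod_type, ← Finset.mul_sum, hE₂, mul_one, hpsum, le_refl]
  have h := sum_sum_mul_negMulLog_le (fun k m => mul_nonneg (hp k.1) (hE k m))
    (fun k => ha k.1 k.2) hc
  simp only [← Finset.mul_sum, hE₁, mul_one, Fintype.sum_prod_type] at h
  simpa only [Finset.mul_sum, hlam, Fintype.sum_prod_type, mul_right_comm] using h

theorem sum_negMulLog_le_of_mul_sum_inv_le_one {w : α → ℝ} {E : α → β → ℝ} {lam : β → ℝ}
    (hw : ∀ k, 0 ≤ w k) (hE : ∀ k m, 0 ≤ E k m) (hE₁ : ∀ k, ∑ m, E k m = 1)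
    (hlam : ∀ m, lam m = ∑ k, w k * E k m) (hbound : ∀ k, w k * ∑ m, (lam m)⁻¹ * E k m ≤ 1) :
    ∑ m, negMulLog (lam m) ≤ ∑ k, negMulLog (w k) := by
  have hwE : ∀ k m, 0 ≤ w k * E k m := fun k m => mul_nonneg (hw k) (hE k m)
  have hlam0 : ∀ m, 0 ≤ lam m := fun m => hlam m ▸ Finset.sum_nonneg fun k _ => hwE k m
  have hcancel : ∀ k m, (lam m)⁻¹ * (w k * E k m) * lam m = w k * E k m := by
    intro k m
    rcases eq_or_ne (lam m) 0 with h | h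
    · rw [hlam m, Finset.sum_eq_zero_iff_of_nonneg fun k _ => hwE k m] at h
      simp [h k (Finset.mem_univ k)]
    · field_simp
  have h := sum_sum_mul_negMulLog_le (c := fun m k => (lam m)⁻¹ * (w k * E k m)) (x := lam)
    (fun m k => mul_nonneg (inv_nonneg.2 (hlam0 m)) (hwE k m)) hlam0
    (fun k => by simpa only [Finset.mul_sum, mul_left_comm] using hbound k)
  simp only [hcancel, ← Finset.mul_sum, hE₁, mul_one, ← hlam] at h
  refine le_of_eq_of_le (Finset.sum_congr rfl fun m _ => ?_) h
  rcases eq_or_ne (lam m) 0 with h | h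
  · simp [h]
  · rw [inv_mul_cancel₀ h, one_mul]

theorem sum_sum_negMulLog_mul {p : ι → ℝ} {a : ι → α → ℝ} (ha : ∀ i, ∑ j, a i j = 1) :
    ∑ i, ∑ j, negMulLog (p i * a i j) =
      ∑ i, p i * ∑ j, negMulLog (a i j) + ∑ i, negMulLog (p i) := by
  simp only [negMulLog_mul, Finset.sum_add_distrib, ← Finset.sum_mul, ha, one_mul,
    ← Finset.mul_sum]
  ring

end Real

namespace Matrix

variable {n κ : Type*}

theorem star_dotProduct_mul_diagonal_mul_conjTranspose_mulVec [Fintype n] [Fintype κ]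
    [DecidableEq κ] (C : Matrix n κ ℂ) (w : κ → ℝ) (u : n → ℂ) :
    star u ⬝ᵥ ((C * diagonal (fun k => (w k : ℂ)) * Cᴴ) *ᵥ u)
      = ((∑ k, w k * Complex.normSq ((Cᴴ *ᵥ u) k) : ℝ) : ℂ) := by
  rw [← mulVec_mulVec, ← mulVec_mulVec, dotProduct_mulVec, ← conjTranspose_conjTranspose C,
    ← star_mulVec, conjTranspose_conjTranspose]
  simp only [dotProduct, mulVec_diagonal, Pi.star_apply, RCLike.star_def, Complex.ofReal_sum,
    Complex.ofReal_mul, ← Complex.mul_conj, mul_comm, mul_assoc]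

theorem sum_normSq_apply_left_of_mem_unitaryGroup [Fintype n] [DecidableEq n]
    {U : Matrix n n ℂ}
    (hU : U ∈ unitaryGroup n ℂ) (j : n) : ∑ i, Complex.normSq (U i j) = 1 := by
  have h := congrFun (congrFun (mem_unitaryGroup_iff'.mp hU) j) j
  simp only [mul_apply, star_apply, one_apply_eq, RCLike.star_def, mul_comm (starRingEnd ℂ _),
    Complex.mul_conj] at h
  exact_mod_cast h

theorem sum_normSq_apply_right_of_mem_unitaryGroup [Fintype n] [DecidableEq n]
    {U : Matrix n n ℂ}
    (hU : U ∈ unitaryGroup n ℂ) (i : n) : ∑ j, Complex.normSq (U i j) = 1 := by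
  have h := congrFun (congrFun (mem_unitaryGroup_iff.mp hU) i) i
  simp only [mul_apply, star_apply, one_apply_eq, RCLike.star_def, Complex.mul_conj] at h
  exact_mod_cast h

theorem eq_sum_mul_normSq_of_diagonal_eq [DecidableEq n] [Fintype κ] [DecidableEq κ]
    {lam : n → ℝ} {w : κ → ℝ} {C : Matrix n κ ℂ}
    (hC : diagonal (fun m => (lam m : ℂ)) = C * diagonal (fun k => (w k : ℂ)) * Cᴴ) (m : n) :
    lam m = ∑ k, w k * Complex.normSq (C m k) := by
  have h := congrFun (congrFun hC m) m
  rw [diagonal_apply_eq, mul_apply] at h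
  simp only [mul_diagonal, conjTranspose_apply, RCLike.star_def, mul_comm _ (w _ : ℂ), mul_assoc,
    Complex.mul_conj] at h
  exact_mod_cast h

theorem mul_sum_inv_mul_normSq_le_one [Fintype n] [DecidableEq n] [Fintype κ] [DecidableEq κ]
    {lam : n → ℝ} {w : κ → ℝ} {C : Matrix n κ ℂ} (hw : ∀ k, 0 ≤ w k)
    (hC : diagonal (fun m => (lam m : ℂ)) = C * diagonal (fun k => (w k : ℂ)) * Cᴴ) (k : κ) :
    w k * ∑ m, (lam m)⁻¹ * Complex.normSq (C m k) ≤ 1 := by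
  -- `u = D⁺ cₖ` with `D = diagonal lam` and `cₖ` the `k`-th column of `C`: both `⟨u, D u⟩` and
  -- `⟨cₖ, u⟩` equal `t`, and `D ≥ w k • cₖ cₖᴴ` gives `t ≥ w k * t ^ 2`
  set t := ∑ m, (lam m)⁻¹ * Complex.normSq (C m k)
  set u : n → ℂ := fun m => ((lam m)⁻¹ : ℝ) * C m k
  have hCu : (Cᴴ *ᵥ u) k = t := by
    simp only [mulVec, dotProduct, conjTranspose_apply, RCLike.star_def, u, t, Complex.ofReal_sum,
      Complex.ofReal_mul, ← Complex.mul_conj, mul_left_comm (starRingEnd ℂ _), mul_comm (C _ k)]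
  have hquad : t = ∑ k, w k * Complex.normSq ((Cᴴ *ᵥ u) k) := by
    have h := star_dotProduct_mul_diagonal_mul_conjTranspose_mulVec 1 lam u
    rw [Matrix.one_mul, conjTranspose_one, Matrix.mul_one, hC,
      star_dotProduct_mul_diagonal_mul_conjTranspose_mulVec, Complex.ofReal_inj] at h
    rw [h]
    refine Finset.sum_congr rfl fun m _ => ?_
    rw [one_mulVec, Complex.normSq_mul, Complex.normSq_ofReal, ← mul_assoc, ← mul_assoc]
    rcases eq_or_ne (lam m) 0 with h | h
    · simp [h]
    · field_simp
  have hterm : ∀ k, 0 ≤ w k * Complex.normSq ((Cᴴ *ᵥ u) k) :=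
    fun k => mul_nonneg (hw k) (Complex.normSq_nonneg _)
  have ht : 0 ≤ t := hquad ▸ Finset.sum_nonneg fun k _ => hterm k
  have hwt : w k * t ^ 2 ≤ t :=
    calc w k * t ^ 2 = w k * Complex.normSq ((Cᴴ *ᵥ u) k) := by
          rw [hCu, Complex.normSq_ofReal, sq]
      _ ≤ t := hquad ▸ Finset.single_le_sum (fun k _ => hterm k) (Finset.mem_univ k)
  rcases ht.eq_or_lt with h | h
  · simp [← h]
  · nlinarith

/-- `C m (i, j)` is the overlap of the `m`-th eigenvector of the mixture with the `j`-th
eigenvector of `ρ i`. -/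
theorem IsHermitian.exists_diagonal_eigenvalues_eq_sum_smul [Fintype n] [DecidableEq n]
    {ι : Type*} [Fintype ι] [DecidableEq ι] (p : ι → ℝ) {ρ : ι → Matrix n n ℂ}
    (hρ : ∀ i, (ρ i).IsHermitian)
    (hmix : (∑ i, (p i : ℂ) • ρ i).IsHermitian) :
    ∃ C : Matrix n (ι × n) ℂ, (∀ k, ∑ m, Complex.normSq (C m k) = 1) ∧
      (∀ i m, ∑ j, Complex.normSq (C m (i, j)) = 1) ∧
      diagonal (fun m => (hmix.eigenvalues m : ℂ)) =
        C * diagonal (fun k : ι × n => ((p k.1 * (hρ k.1).eigenvalues k.2 : ℝ) : ℂ)) * Cᴴ := by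
  set W := hmix.eigenvectorUnitary
  set M : ι → unitaryGroup n ℂ := fun i => star W * (hρ i).eigenvectorUnitary
  have hconj : ∀ i, star (W : Matrix n n ℂ) * ρ i * W
      = M i * diagonal (fun j => ((hρ i).eigenvalues j : ℂ)) * star (M i : Matrix n n ℂ) := by
    intro i
    conv_lhs => rw [(hρ i).spectral_theorem, Unitary.conjStarAlgAut_apply]
    simp only [M, Submonoid.coe_mul, Unitary.coe_star, star_mul, star_star, Matrix.mul_assoc]
    rfl
  have hdiag : diagonal (fun m => (hmix.eigenvalues m : ℂ))
      = ∑ i, (p i : ℂ) • (star (W : Matrix n n ℂ) * ρ i * W) := by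
    have h := hmix.conjStarAlgAut_star_eigenvectorUnitary
    rw [Unitary.conjStarAlgAut_star_apply, Matrix.mul_sum, Matrix.sum_mul] at h
    simp only [Matrix.mul_smul, Matrix.smul_mul] at h
    exact h.symm
  refine ⟨Matrix.of fun m k => M k.1 m k.2, fun k => ?_, fun i m => ?_, ?_⟩
  · exact sum_normSq_apply_left_of_mem_unitaryGroup (M k.1).2 k.2
  · exact sum_normSq_apply_right_of_mem_unitaryGroup (M i).2 m
  · rw [hdiag]
    ext m m'
    simp only [hconj, sum_apply, smul_apply, mul_apply (M := _ * diagonal _), mul_diagonal,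
      Matrix.of_apply, conjTranspose_apply, star_apply, smul_eq_mul, Fintype.sum_prod_type,
      Finset.mul_sum, Complex.ofReal_mul]
    exact Finset.sum_congr rfl fun i _ => Finset.sum_congr rfl fun j _ => by ring

end Matrix

/-- Entropy sandwich for mixtures:
`Σ pᵢ S(ρᵢ) ≤ S(Σ pᵢ ρᵢ) ≤ Σ pᵢ S(ρᵢ) + H(p)`. -/
theorem entropy_sandwich {ι : Type*} [Fintype ι] {d : ℕ}
    (p : ι → ℝ) (ρ : ι → Matrix (Fin d) (Fin d) ℂ)
    (hρ : ∀ i, (ρ i).PosSemidef) (htr : ∀ i, (ρ i).trace = 1)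
    (hp : ∀ i, 0 ≤ p i) (hpsum : ∑ i, p i = 1)
    (hmix : (∑ i, ((p i : ℂ) • ρ i)).IsHermitian) :
    ∑ i, p i * vnEntropy (ρ i) (hρ i).isHermitian ≤ vnEntropy _ hmix ∧
      vnEntropy _ hmix ≤
        ∑ i, p i * vnEntropy (ρ i) (hρ i).isHermitian + ∑ i, Real.negMulLog (p i) := by
  classical
  set a : ι → Fin d → ℝ := fun i => (hρ i).isHermitian.eigenvalues
  have ha : ∀ i j, 0 ≤ a i j := fun i => (hρ i).eigenvalues_nonneg
  have ha₁ : ∀ i, ∑ j, a i j = 1 := fun i => by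
    show ∑ j, (hρ i).isHermitian.eigenvalues j = 1
    have h := (hρ i).isHermitian.trace_eq_sum_eigenvalues
    rw [htr i, ← RCLike.ofReal_sum, ← RCLike.ofReal_one, RCLike.ofReal_inj] at h
    exact h.symm
  have hw : ∀ k : ι × Fin d, 0 ≤ p k.1 * a k.1 k.2 := fun k => mul_nonneg (hp k.1) (ha k.1 k.2)
  obtain ⟨C, hC₁, hC₂, hC⟩ :=
    IsHermitian.exists_diagonal_eigenvalues_eq_sum_smul p (fun i => (hρ i).isHermitian) hmix
  have hlam := eq_sum_mul_normSq_of_diagonal_eq hC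
  have hE : ∀ k m, 0 ≤ Complex.normSq (C m k) := fun _ _ => Complex.normSq_nonneg _
  refine ⟨Real.sum_mul_sum_negMulLog_le_of_doublyStochastic hp hpsum ha hE hC₁ hC₂ hlam, ?_⟩
  calc vnEntropy _ hmix ≤ ∑ k : ι × Fin d, Real.negMulLog (p k.1 * a k.1 k.2) :=
        Real.sum_negMulLog_le_of_mul_sum_inv_le_one hw hE hC₁ hlam
          (mul_sum_inv_mul_normSq_le_one hw hC)
    _ = _ := by
      rw [Fintype.sum_prod_type]
      exact Real.sum_sum_negMulLog_mul ha₁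
end
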